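/- Let X be a separable Banach space, p ∈ (1,∞) and α ∈ (1/p, 1). Then there is a constant C > 0 such that for every continuous function u : [0,1] → X with u(1) = 0 and finite Gagliardo seminorm [u]_{W^{α,p}(0,1;X)}, one has ∫₀¹ ‖u(t)‖_X^p dt ≤ C · [u]_{W^{α,p}(0,1;X)}^p. -/

import Mathlib

/-
Cut (0,1) into the dyadic pieces I_n = (1 - 2^{-n}, 1 - 2^{-n-1}), which accumulate at 1. The
averages a_n of ‖u‖ over I_n tend to 0 because u(1) = 0, and a_n ≤ a_{n+1} + d_n, where d_n is
the average of ‖u(s) - u(σ)‖ over I_n × I_{n+1}. On that rectangle |s - σ| ≤ 2^{-n}, so Jensen's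
inequality gives d_n^p ≤ 8 · 2^{n(1 - αp)} [u]^p, and a_0 ≤ ∑ d_n is dominated by a geometric series
precisely because αp > 1. Finally ‖u(t)‖ ≤ a_0 + ⨍_{I_0} ‖u(t) - u(σ)‖ dσ for every t; raising this
to the power p and integrating over (0,1) bounds ∫ ‖u‖^p by a multiple of [u]^p.
-/

open MeasureTheory Set Filter Topology
open scoped ENNReal

section Average

variable {α β E : Type*} [MeasurableSpace α] [MeasurableSpace β] {μ : Measure α} {ν : Measure β}

theorem laverage_rpow_le [IsFiniteMeasure μ] {f : α → ℝ≥0∞} (hf : AEMeasurable f μ) {p : ℝ}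
    (hp : 1 ≤ p) : (⨍⁻ x, f x ∂μ) ^ p ≤ ⨍⁻ x, f x ^ p ∂μ := by
  rcases eq_zero_or_neZero μ with rfl | _
  · simp [ENNReal.zero_rpow_of_pos (zero_lt_one.trans_le hp)]
  have h := eLpNorm'_le_eLpNorm'_of_exponent_le one_pos hp ((μ univ)⁻¹ • μ)
    (hf.smul_measure _).aestronglyMeasurable
  simp only [eLpNorm'_eq_lintegral_enorm, enorm_eq_self, ENNReal.rpow_one, div_one,
    one_div] at h
  rwa [laverage_eq', laverage_eq', ← ENNReal.le_rpow_inv_iff (zero_lt_one.trans_le hp)]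

theorem laverage_prod [IsFiniteMeasure μ] [IsFiniteMeasure ν] {F : α × β → ℝ≥0∞}
    (hF : AEMeasurable F (μ.prod ν)) :
    ⨍⁻ z, F z ∂μ.prod ν = ⨍⁻ x, ⨍⁻ y, F (x, y) ∂ν ∂μ := by
  simp only [laverage_eq, ENNReal.div_eq_inv_mul]
  rw [lintegral_const_mul'' _ hF.lintegral_prod_right', lintegral_prod _ hF, ← mul_assoc,
    ← univ_prod_univ, Measure.prod_prod,
    ENNReal.mul_inv (.inr (measure_ne_top _ _)) (.inl (measure_ne_top _ _)), mul_comm (μ univ)⁻¹]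

theorem laverage_const_add [IsFiniteMeasure μ] [NeZero μ] (c : ℝ≥0∞) (f : α → ℝ≥0∞) :
    ⨍⁻ x, (c + f x) ∂μ = c + ⨍⁻ x, f x ∂μ := by
  rw [laverage_eq', laverage_eq', lintegral_add_left measurable_const, lintegral_const,
    measure_univ, mul_one]

variable [NormedAddCommGroup E]

theorem enorm_le_laverage_add_laverage_enorm_sub [IsFiniteMeasure ν] [NeZero ν] (a : E)
    {g : β → E} (hg : AEStronglyMeasurable g ν) :
    ‖a‖ₑ ≤ ⨍⁻ y, ‖g y‖ₑ ∂ν + ⨍⁻ y, ‖a - g y‖ₑ ∂ν := calc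
  ‖a‖ₑ = ⨍⁻ _, ‖a‖ₑ ∂ν := (laverage_const ν _).symm
  _ ≤ ⨍⁻ y, (‖g y‖ₑ + ‖a - g y‖ₑ) ∂ν :=
    laverage_mono_ae <| .of_forall fun y => by simpa using enorm_add_le (g y) (a - g y)
  _ = ⨍⁻ y, ‖g y‖ₑ ∂ν + ⨍⁻ y, ‖a - g y‖ₑ ∂ν := by
    rw [laverage_eq', laverage_eq', laverage_eq',
      lintegral_add_left' (hg.enorm.smul_measure _)]

theorem laverage_enorm_le_laverage_add_laverage_prod [IsFiniteMeasure μ] [NeZero μ]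
    [IsFiniteMeasure ν] [NeZero ν] {f : α → E} {g : β → E} (hf : AEStronglyMeasurable f μ)
    (hg : AEStronglyMeasurable g ν) :
    ⨍⁻ x, ‖f x‖ₑ ∂μ ≤ ⨍⁻ y, ‖g y‖ₑ ∂ν + ⨍⁻ z, ‖f z.1 - g z.2‖ₑ ∂μ.prod ν := calc
  ⨍⁻ x, ‖f x‖ₑ ∂μ ≤ ⨍⁻ x, (⨍⁻ y, ‖g y‖ₑ ∂ν + ⨍⁻ y, ‖f x - g y‖ₑ ∂ν) ∂μ :=
    laverage_mono_ae <| .of_forall fun x => enorm_le_laverage_add_laverage_enorm_sub (f x) hg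
  _ = _ := by
    rw [laverage_const_add,
      laverage_prod (F := fun z => ‖f z.1 - g z.2‖ₑ) (hf.comp_fst.sub hg.comp_snd).enorm]

end Average

theorem ENNReal.le_tsum_of_le_add_of_tendsto_zero {a d : ℕ → ℝ≥0∞}
    (hstep : ∀ n, a n ≤ a (n + 1) + d n) (ha : Tendsto a atTop (𝓝 0)) : a 0 ≤ ∑' n, d n := by
  have hpartial : ∀ n, a 0 ≤ a n + ∑ k ∈ Finset.range n, d k := by
    intro n
    induction n with
    | zero => simp
    | succ n ih =>
      calc a 0 ≤ a n + ∑ k ∈ Finset.range n, d k := ih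
        _ ≤ a (n + 1) + d n + ∑ k ∈ Finset.range n, d k := by gcongr; exact hstep n
        _ = a (n + 1) + ∑ k ∈ Finset.range (n + 1), d k := by
          rw [Finset.sum_range_succ]; ring
  refine ge_of_tendsto' (by simpa using ha.add_const (∑' n, d n)) fun n => ?_
  exact (hpartial n).trans (by gcongr; exact ENNReal.sum_le_tsum _)

theorem ENNReal.tsum_rpow_le_of_rpow_le_geometric {d : ℕ → ℝ≥0∞} {c r : ℝ≥0∞} {p : ℝ}
    (hp : 0 < p) (hd : ∀ n, d n ^ p ≤ c * r ^ n) :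
    (∑' n, d n) ^ p ≤ c * (1 - r ^ p⁻¹)⁻¹ ^ p := by
  have hterm : ∀ n, d n ≤ c ^ p⁻¹ * (r ^ p⁻¹) ^ n := fun n => by
    have hpow : (r ^ p⁻¹) ^ n = (r ^ n) ^ p⁻¹ := by
      rw [← ENNReal.rpow_natCast, ← ENNReal.rpow_mul, mul_comm, ENNReal.rpow_mul,
        ENNReal.rpow_natCast]
    rw [hpow, ← ENNReal.mul_rpow_of_nonneg _ _ (inv_nonneg.2 hp.le),
      ENNReal.le_rpow_inv_iff hp]
    exact hd n
  calc (∑' n, d n) ^ p ≤ (c ^ p⁻¹ * (1 - r ^ p⁻¹)⁻¹) ^ p := by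
        gcongr
        calc ∑' n, d n ≤ ∑' n, c ^ p⁻¹ * (r ^ p⁻¹) ^ n := ENNReal.tsum_le_tsum hterm
          _ = c ^ p⁻¹ * (1 - r ^ p⁻¹)⁻¹ := by rw [ENNReal.tsum_mul_left, ENNReal.tsum_geometric]
    _ = c * (1 - r ^ p⁻¹)⁻¹ ^ p := by
        rw [ENNReal.mul_rpow_of_nonneg _ _ hp.le, ← ENNReal.rpow_mul, inv_mul_cancel₀ hp.ne',
          ENNReal.rpow_one]

theorem tendsto_setLAverage_of_tendsto_smallSets {α ι : Type*} [MeasurableSpace α]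
    {μ : Measure α} {L : Filter α} {l : Filter ι} {g : α → ℝ≥0∞} {s : ι → Set α}
    (hg : Tendsto g L (𝓝 0)) (hs : Tendsto s l L.smallSets) (hsm : ∀ i, MeasurableSet (s i)) :
    Tendsto (fun i => ⨍⁻ x in s i, g x ∂μ) l (𝓝 0) := by
  refine ENNReal.tendsto_nhds_zero.2 fun ε hε => ?_
  filter_upwards [hs.eventually (eventually_smallSets_forall.2
    (ENNReal.tendsto_nhds_zero.1 hg ε hε))] with i hi
  exact (laverage_le_essSup _).trans (essSup_le_of_ae_le _ (ae_restrict_of_forall_mem (hsm i) hi))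

section Dyadic

theorem volume_Ioo_zero_one : volume (Ioo (0 : ℝ) 1) = 1 := by simp [Real.volume_Ioo]

theorem two_inv_pow_rpow_div (n : ℕ) (β : ℝ) :
    ((2⁻¹ : ℝ≥0∞) ^ n) ^ β / (2⁻¹ ^ (n + 1) * 2⁻¹ ^ (n + 2)) = 8 * (2 ^ (2 - β)) ^ n := by
  have h2 : ∀ k : ℕ, (2⁻¹ : ℝ≥0∞) ^ k = 2 ^ (-(k : ℝ)) := fun k => by
    rw [ENNReal.rpow_neg, ENNReal.rpow_natCast, ENNReal.inv_pow]
  have h8 : (8 : ℝ≥0∞) = 2 ^ ((3 : ℕ) : ℝ) := by rw [ENNReal.rpow_natCast]; norm_num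
  rw [h2, h2, h2, h8, ← ENNReal.rpow_natCast (2 ^ (2 - β)), ← ENNReal.rpow_mul, ← ENNReal.rpow_mul,
    ← ENNReal.rpow_add _ _ two_ne_zero ENNReal.ofNat_ne_top, div_eq_mul_inv, ← ENNReal.rpow_neg,
    ← ENNReal.rpow_add _ _ two_ne_zero ENNReal.ofNat_ne_top,
    ← ENNReal.rpow_add _ _ two_ne_zero ENNReal.ofNat_ne_top]
  congr 1
  push_cast
  ring

def dyadicPiece (n : ℕ) : Set ℝ := Ioo (1 - 2⁻¹ ^ n) (1 - 2⁻¹ ^ (n + 1))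

theorem dyadicPiece_subset_Ioo (n : ℕ) : dyadicPiece n ⊆ Ioo 0 1 := fun x ⟨hx₁, hx₂⟩ =>
  ⟨(sub_nonneg.2 (pow_le_one₀ (by norm_num) (by norm_num))).trans_lt hx₁,
    hx₂.trans (sub_lt_self 1 (by positivity))⟩

theorem volume_dyadicPiece (n : ℕ) : volume (dyadicPiece n) = 2⁻¹ ^ (n + 1) := by
  rw [dyadicPiece, Real.volume_Ioo, show 1 - (2⁻¹ : ℝ) ^ (n + 1) - (1 - 2⁻¹ ^ n) = 2⁻¹ ^ (n + 1) by
    ring, ENNReal.ofReal_pow (by norm_num), ENNReal.ofReal_inv_of_pos two_pos, ENNReal.ofReal_ofNat]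

instance (n : ℕ) : NeZero (volume (dyadicPiece n)) :=
  ⟨by simp [volume_dyadicPiece]⟩

theorem enorm_sub_le_of_mem_dyadicPiece {n : ℕ} {x y : ℝ} (hx : x ∈ dyadicPiece n)
    (hy : y ∈ dyadicPiece (n + 1)) : ‖x - y‖ₑ ≤ 2⁻¹ ^ n := by
  obtain ⟨hx₁, hx₂⟩ := hx
  obtain ⟨hy₁, hy₂⟩ := hy
  have hpos : (0 : ℝ) < 2⁻¹ ^ (n + 2) := by positivity
  have habs : |x - y| ≤ 2⁻¹ ^ n := abs_le.2 ⟨by linarith [pow_succ (2⁻¹ : ℝ) (n + 1)], by linarith⟩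
  rw [Real.enorm_eq_ofReal_abs, ← ENNReal.ofReal_ofNat 2, ← ENNReal.ofReal_inv_of_pos two_pos,
    ← ENNReal.ofReal_pow (by norm_num)]
  exact ENNReal.ofReal_le_ofReal habs

theorem tendsto_dyadicPiece_smallSets : Tendsto dyadicPiece atTop (𝓝[<] (1 : ℝ)).smallSets := by
  refine (nhdsLT_basis (1 : ℝ)).smallSets.tendsto_right_iff.2 fun ε hε => ?_
  filter_upwards [(tendsto_pow_atTop_nhds_zero_of_lt_one (by norm_num : (0 : ℝ) ≤ 2⁻¹)
    (by norm_num)).eventually (gt_mem_nhds (sub_pos.2 hε))] with n hn x ⟨hx₁, hx₂⟩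
  exact ⟨by linarith, hx₂.trans (sub_lt_self 1 (by positivity))⟩

theorem volume_dyadicPiece_prod (n : ℕ) :
    volume (dyadicPiece n ×ˢ dyadicPiece (n + 1)) = 2⁻¹ ^ (n + 1) * 2⁻¹ ^ (n + 2) := by
  rw [Measure.volume_eq_prod, Measure.prod_prod, volume_dyadicPiece, volume_dyadicPiece]

instance (n : ℕ) : IsFiniteMeasure (volume.restrict (dyadicPiece n)) :=
  isFiniteMeasure_restrict.2 (by simp [volume_dyadicPiece])

end Dyadic

/- `2 ^ (p - 1)` is the constant of `(a + b) ^ p ≤ 2 ^ (p - 1) * (a ^ p + b ^ p)`; the first summand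
bounds the average of `‖u‖` over `dyadicPiece 0` through a geometric series of ratio
`2 ^ ((1 - α p) / p)`, and the second is `(volume (dyadicPiece 0))⁻¹`. -/
noncomputable def poincareConst (p α : ℝ) : ℝ≥0∞ :=
  2 ^ (p - 1) * (8 * (1 - (2 ^ (1 - α * p)) ^ p⁻¹)⁻¹ ^ p + 2)

theorem poincareConst_ne_zero (p α : ℝ) : poincareConst p α ≠ 0 :=
  mul_ne_zero (ENNReal.rpow_pos two_pos ENNReal.ofNat_ne_top).ne' (by simp)

theorem poincareConst_ne_top {p α : ℝ} (hp : 0 < p) (hαp : 1 < α * p) : poincareConst p α ≠ ∞ := by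
  have hr : (2 : ℝ≥0∞) ^ (1 - α * p) < 1 :=
    ENNReal.rpow_lt_one_of_one_lt_of_neg (by norm_num) (by linarith)
  have hgap : 1 - ((2 : ℝ≥0∞) ^ (1 - α * p)) ^ p⁻¹ ≠ 0 :=
    (tsub_pos_of_lt (ENNReal.rpow_lt_one hr (inv_pos.2 hp))).ne'
  refine ENNReal.mul_ne_top (ENNReal.rpow_ne_top_of_ne_zero two_ne_zero ENNReal.ofNat_ne_top) ?_
  exact ENNReal.add_ne_top.2 ⟨ENNReal.mul_ne_top ENNReal.ofNat_ne_top
    (ENNReal.rpow_ne_top_of_nonneg hp.le (ENNReal.inv_ne_top.2 hgap)), ENNReal.ofNat_ne_top⟩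

section Gagliardo

variable {E : Type*} [NormedAddCommGroup E] {u : ℝ → E} {p α : ℝ}

noncomputable def gagliardoKernel (u : ℝ → E) (p α : ℝ) (z : ℝ × ℝ) : ℝ≥0∞ :=
  ‖u z.1 - u z.2‖ₑ ^ p / ‖z.1 - z.2‖ₑ ^ (1 + α * p)

theorem ofReal_gagliardo_integrand (hp : 0 < p) (z : ℝ × ℝ) :
    ENNReal.ofReal (‖u z.1 - u z.2‖ ^ p / |z.1 - z.2| ^ (1 + α * p)) = gagliardoKernel u p α z := by
  by_cases h : z.1 = z.2
  · simp [gagliardoKernel, h, Real.zero_rpow hp.ne', ENNReal.zero_rpow_of_pos hp]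
  rw [ENNReal.ofReal_div_of_pos (Real.rpow_pos_of_pos (abs_pos.2 (sub_ne_zero.2 h)) _),
    ← ENNReal.ofReal_rpow_of_nonneg (norm_nonneg _) hp.le,
    ← ENNReal.ofReal_rpow_of_pos (abs_pos.2 (sub_ne_zero.2 h)), ofReal_norm,
    ← Real.enorm_eq_ofReal_abs, gagliardoKernel]

theorem enorm_sub_rpow_eq_mul_gagliardoKernel (hp : 0 < p) (z : ℝ × ℝ) :
    ‖u z.1 - u z.2‖ₑ ^ p = ‖z.1 - z.2‖ₑ ^ (1 + α * p) * gagliardoKernel u p α z := by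
  by_cases h : z.1 = z.2
  · simp [gagliardoKernel, h, ENNReal.zero_rpow_of_pos hp]
  have h0 : ‖z.1 - z.2‖ₑ ≠ 0 := by simpa [sub_eq_zero] using h
  exact (ENNReal.mul_div_cancel (ENNReal.rpow_pos (pos_iff_ne_zero.2 h0) enorm_ne_top).ne'
    (ENNReal.rpow_ne_top_of_ne_zero h0 enorm_ne_top)).symm

theorem setLAverage_enorm_sub_rpow_le {A S : Set (ℝ × ℝ)} (hA : MeasurableSet A) (hAS : A ⊆ S)
    {D : ℝ≥0∞} (hD : ∀ z ∈ A, ‖z.1 - z.2‖ₑ ≤ D) (hD_top : D ≠ ∞) (hp : 0 < p) (hβ : 0 ≤ 1 + α * p) :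
    ⨍⁻ z in A, ‖u z.1 - u z.2‖ₑ ^ p ∂volume ≤
      D ^ (1 + α * p) * (∫⁻ z in S, gagliardoKernel u p α z) / volume A := by
  rw [setLAverage_eq]
  gcongr
  calc ∫⁻ z in A, ‖u z.1 - u z.2‖ₑ ^ p ≤ ∫⁻ z in A, D ^ (1 + α * p) * gagliardoKernel u p α z := by
        refine lintegral_mono_ae (ae_restrict_of_forall_mem hA fun z hz => ?_)
        rw [enorm_sub_rpow_eq_mul_gagliardoKernel hp]
        gcongr
        exact hD z hz
    _ = D ^ (1 + α * p) * ∫⁻ z in A, gagliardoKernel u p α z :=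
        lintegral_const_mul' _ _ (ENNReal.rpow_ne_top_of_nonneg hβ hD_top)
    _ ≤ D ^ (1 + α * p) * ∫⁻ z in S, gagliardoKernel u p α z := by gcongr

theorem ContinuousOn.aestronglyMeasurable_dyadicPiece (hu : ContinuousOn u (Icc 0 1)) (n : ℕ) :
    AEStronglyMeasurable u (volume.restrict (dyadicPiece n)) :=
  (hu.mono ((dyadicPiece_subset_Ioo n).trans Ioo_subset_Icc_self)).aestronglyMeasurable
    measurableSet_Ioo

theorem setLAverage_enorm_dyadicPiece_zero_le_tsum (hu : ContinuousOn u (Icc 0 1))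
    (hu1 : u 1 = 0) :
    ⨍⁻ x in dyadicPiece 0, ‖u x‖ₑ ∂volume ≤
      ∑' n, ⨍⁻ z in dyadicPiece n ×ˢ dyadicPiece (n + 1), ‖u z.1 - u z.2‖ₑ ∂volume := by
  refine ENNReal.le_tsum_of_le_add_of_tendsto_zero
    (a := fun n => ⨍⁻ x in dyadicPiece n, ‖u x‖ₑ ∂volume) (fun n => ?_) ?_
  · rw [Measure.volume_eq_prod, ← Measure.prod_restrict]
    exact laverage_enorm_le_laverage_add_laverage_prod (hu.aestronglyMeasurable_dyadicPiece n)
      (hu.aestronglyMeasurable_dyadicPiece (n + 1))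
  · have hlim : Tendsto (fun x => ‖u x‖ₑ) (𝓝[<] 1) (𝓝 0) := by
      have := ((hu 1 (right_mem_Icc.2 zero_le_one)).mono Ioo_subset_Icc_self).enorm
      rwa [ContinuousWithinAt, nhdsWithin_Ioo_eq_nhdsLT zero_lt_one, hu1, enorm_zero] at this
    exact tendsto_setLAverage_of_tendsto_smallSets hlim tendsto_dyadicPiece_smallSets
      fun n => measurableSet_Ioo

theorem setLAverage_enorm_sub_dyadicPiece_rpow_le (hp : 1 ≤ p) (hβ : 0 ≤ 1 + α * p)
    (hu : ContinuousOn u (Icc 0 1)) (n : ℕ) :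
    (⨍⁻ z in dyadicPiece n ×ˢ dyadicPiece (n + 1), ‖u z.1 - u z.2‖ₑ ∂volume) ^ p ≤
      8 * (∫⁻ z in Ioo 0 1 ×ˢ Ioo 0 1, gagliardoKernel u p α z) * (2 ^ (1 - α * p)) ^ n := by
  have : IsFiniteMeasure (volume.restrict (dyadicPiece n ×ˢ dyadicPiece (n + 1))) :=
    isFiniteMeasure_restrict.2 (by
      rw [volume_dyadicPiece_prod]; exact ENNReal.mul_ne_top (by simp) (by simp))
  have hmeas : AEMeasurable (fun z : ℝ × ℝ => ‖u z.1 - u z.2‖ₑ)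
      (volume.restrict (dyadicPiece n ×ˢ dyadicPiece (n + 1))) := by
    rw [Measure.volume_eq_prod, ← Measure.prod_restrict]
    exact ((hu.aestronglyMeasurable_dyadicPiece n).comp_fst.sub
      (hu.aestronglyMeasurable_dyadicPiece (n + 1)).comp_snd).enorm
  calc _ ≤ ⨍⁻ z in dyadicPiece n ×ˢ dyadicPiece (n + 1), ‖u z.1 - u z.2‖ₑ ^ p ∂volume :=
        laverage_rpow_le hmeas hp
    _ ≤ (2⁻¹ ^ n) ^ (1 + α * p) * (∫⁻ z in Ioo 0 1 ×ˢ Ioo 0 1, gagliardoKernel u p α z) /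
          volume (dyadicPiece n ×ˢ dyadicPiece (n + 1)) :=
        setLAverage_enorm_sub_rpow_le (measurableSet_Ioo.prod measurableSet_Ioo)
          (prod_mono (dyadicPiece_subset_Ioo n) (dyadicPiece_subset_Ioo (n + 1)))
          (fun z hz => enorm_sub_le_of_mem_dyadicPiece hz.1 hz.2) (by simp)
          (zero_lt_one.trans_le hp) hβ
    _ = _ := by
        rw [volume_dyadicPiece_prod, ENNReal.mul_div_right_comm, two_inv_pow_rpow_div,
          show 2 - (1 + α * p) = 1 - α * p by ring]
        ring

theorem setLAverage_enorm_dyadicPiece_zero_rpow_le (hp : 1 ≤ p) (hβ : 0 ≤ 1 + α * p)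
    (hu : ContinuousOn u (Icc 0 1)) (hu1 : u 1 = 0) :
    (⨍⁻ x in dyadicPiece 0, ‖u x‖ₑ ∂volume) ^ p ≤
      8 * (∫⁻ z in Ioo 0 1 ×ˢ Ioo 0 1, gagliardoKernel u p α z) *
        (1 - (2 ^ (1 - α * p)) ^ p⁻¹)⁻¹ ^ p :=
  (ENNReal.rpow_le_rpow (setLAverage_enorm_dyadicPiece_zero_le_tsum hu hu1)
    (zero_le_one.trans hp)).trans <| ENNReal.tsum_rpow_le_of_rpow_le_geometric
      (zero_lt_one.trans_le hp) (setLAverage_enorm_sub_dyadicPiece_rpow_le hp hβ hu)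

theorem lintegral_setLAverage_enorm_sub_rpow_le (hp : 0 < p) (hβ : 0 ≤ 1 + α * p)
    (hu : ContinuousOn u (Icc 0 1)) :
    ∫⁻ t in Ioo 0 1, ⨍⁻ σ in dyadicPiece 0, ‖u t - u σ‖ₑ ^ p ∂volume ≤
      2 * ∫⁻ z in Ioo 0 1 ×ˢ Ioo 0 1, gagliardoKernel u p α z := by
  have hmeas : AEMeasurable (fun z : ℝ × ℝ => ‖u z.1 - u z.2‖ₑ ^ p)
      ((volume.restrict (Ioo 0 1)).prod (volume.restrict (dyadicPiece 0))) :=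
    (((hu.mono Ioo_subset_Icc_self).aestronglyMeasurable measurableSet_Ioo).comp_fst.sub
      (hu.aestronglyMeasurable_dyadicPiece 0).comp_snd).enorm.pow_const p
  have hdist : ∀ z ∈ Ioo (0 : ℝ) 1 ×ˢ dyadicPiece 0, ‖z.1 - z.2‖ₑ ≤ 1 := fun z ⟨⟨h₁, h₂⟩, hz⟩ => by
    obtain ⟨h₃, h₄⟩ := dyadicPiece_subset_Ioo 0 hz
    rw [Real.enorm_eq_ofReal_abs, ENNReal.ofReal_le_one]
    exact abs_sub_le_iff.2 ⟨by linarith, by linarith⟩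
  calc ∫⁻ t in Ioo 0 1, ⨍⁻ σ in dyadicPiece 0, ‖u t - u σ‖ₑ ^ p ∂volume
      = ⨍⁻ t in Ioo 0 1, ⨍⁻ σ in dyadicPiece 0, ‖u t - u σ‖ₑ ^ p ∂volume ∂volume := by
        rw [setLAverage_eq, volume_Ioo_zero_one, div_one]
    _ = ⨍⁻ z in Ioo 0 1 ×ˢ dyadicPiece 0, ‖u z.1 - u z.2‖ₑ ^ p ∂volume := by
        rw [Measure.volume_eq_prod, ← Measure.prod_restrict, laverage_prod hmeas]
    _ ≤ 1 ^ (1 + α * p) * (∫⁻ z in Ioo 0 1 ×ˢ Ioo 0 1, gagliardoKernel u p α z) /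
          volume (Ioo 0 1 ×ˢ dyadicPiece 0) :=
        setLAverage_enorm_sub_rpow_le (measurableSet_Ioo.prod measurableSet_Ioo)
          (prod_mono subset_rfl (dyadicPiece_subset_Ioo 0)) hdist ENNReal.one_ne_top hp hβ
    _ = 2 * ∫⁻ z in Ioo 0 1 ×ˢ Ioo 0 1, gagliardoKernel u p α z := by
        rw [Measure.volume_eq_prod, Measure.prod_prod, volume_Ioo_zero_one, volume_dyadicPiece,
          ENNReal.one_rpow, one_mul, one_mul, pow_one, ENNReal.div_eq_inv_mul, inv_inv]

theorem lintegral_enorm_rpow_le_poincareConst_mul (hp : 1 ≤ p) (hβ : 0 ≤ 1 + α * p)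
    (hu : ContinuousOn u (Icc 0 1)) (hu1 : u 1 = 0) :
    ∫⁻ t in Ioo 0 1, ‖u t‖ₑ ^ p ≤
      poincareConst p α * ∫⁻ z in Ioo 0 1 ×ˢ Ioo 0 1, gagliardoKernel u p α z := by
  set J := ∫⁻ z in Ioo 0 1 ×ˢ Ioo 0 1, gagliardoKernel u p α z
  set a := ⨍⁻ x in dyadicPiece 0, ‖u x‖ₑ ∂volume
  have hp₀ : 0 < p := zero_lt_one.trans_le hp
  have hpoint : ∀ t, ‖u t‖ₑ ^ p ≤
      2 ^ (p - 1) * (a ^ p + ⨍⁻ σ in dyadicPiece 0, ‖u t - u σ‖ₑ ^ p ∂volume) := fun t => calc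
    ‖u t‖ₑ ^ p ≤ (a + ⨍⁻ σ in dyadicPiece 0, ‖u t - u σ‖ₑ ∂volume) ^ p := by
        gcongr
        exact enorm_le_laverage_add_laverage_enorm_sub (u t) (hu.aestronglyMeasurable_dyadicPiece 0)
    _ ≤ 2 ^ (p - 1) * (a ^ p + (⨍⁻ σ in dyadicPiece 0, ‖u t - u σ‖ₑ ∂volume) ^ p) :=
        ENNReal.rpow_add_le_mul_rpow_add_rpow _ _ hp
    _ ≤ _ := by
        gcongr
        exact laverage_rpow_le
          (aestronglyMeasurable_const.sub (hu.aestronglyMeasurable_dyadicPiece 0)).enorm hp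
  calc ∫⁻ t in Ioo 0 1, ‖u t‖ₑ ^ p
      ≤ ∫⁻ t in Ioo 0 1,
          2 ^ (p - 1) * (a ^ p + ⨍⁻ σ in dyadicPiece 0, ‖u t - u σ‖ₑ ^ p ∂volume) :=
        lintegral_mono hpoint
    _ = 2 ^ (p - 1) *
          (a ^ p + ∫⁻ t in Ioo 0 1, ⨍⁻ σ in dyadicPiece 0, ‖u t - u σ‖ₑ ^ p ∂volume) := by
        rw [lintegral_const_mul' _ _ (ENNReal.rpow_ne_top_of_ne_zero two_ne_zero
          ENNReal.ofNat_ne_top), lintegral_add_left measurable_const, setLIntegral_const,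
          volume_Ioo_zero_one, mul_one]
    _ ≤ 2 ^ (p - 1) * (8 * J * (1 - (2 ^ (1 - α * p)) ^ p⁻¹)⁻¹ ^ p + 2 * J) := by
        gcongr
        · exact setLAverage_enorm_dyadicPiece_zero_rpow_le hp hβ hu hu1
        · exact lintegral_setLAverage_enorm_sub_rpow_le hp₀ hβ hu
    _ = poincareConst p α * J := by rw [poincareConst]; ring

end Gagliardo

theorem stmt1 (X : Type*) [NormedAddCommGroup X]
    (p α : ℝ) (hp : 1 < p) (hα1 : 1 / p < α) :
    ∃ C : ℝ, 0 < C ∧ ∀ u : ℝ → X,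
      ContinuousOn u (Icc 0 1) →
      u 1 = 0 →
      IntegrableOn (fun z : ℝ × ℝ => ‖u z.1 - u z.2‖ ^ p / |z.1 - z.2| ^ (1 + α * p))
        (Ioo (0:ℝ) 1 ×ˢ Ioo (0:ℝ) 1) →
      (∫ t in Ioo (0:ℝ) 1, ‖u t‖ ^ p) ≤
        C * ∫ z in Ioo (0:ℝ) 1 ×ˢ Ioo (0:ℝ) 1,
              ‖u z.1 - u z.2‖ ^ p / |z.1 - z.2| ^ (1 + α * p) := by
  have hp₀ : 0 < p := zero_lt_one.trans hp
  have hαp : 1 < α * p := by rwa [div_lt_iff₀ hp₀] at hα1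
  refine ⟨(poincareConst p α).toReal, ENNReal.toReal_pos (poincareConst_ne_zero p α)
    (poincareConst_ne_top hp₀ hαp), fun u hu hu1 hint => ?_⟩
  have hJ : ENNReal.ofReal (∫ z in Ioo (0:ℝ) 1 ×ˢ Ioo (0:ℝ) 1,
      ‖u z.1 - u z.2‖ ^ p / |z.1 - z.2| ^ (1 + α * p)) =
        ∫⁻ z in Ioo 0 1 ×ˢ Ioo 0 1, gagliardoKernel u p α z := by
    rw [ofReal_integral_eq_lintegral_ofReal hint (.of_forall fun z => by positivity)]
    exact lintegral_congr fun z => ofReal_gagliardo_integrand hp₀ z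
  have hL : ∫ t in Ioo (0:ℝ) 1, ‖u t‖ ^ p = (∫⁻ t in Ioo 0 1, ‖u t‖ₑ ^ p).toReal := by
    rw [integral_eq_lintegral_of_nonneg_ae (.of_forall fun t => by positivity)
      ((hu.norm.rpow_const fun _ _ => .inr hp₀.le).mono Ioo_subset_Icc_self
        |>.aestronglyMeasurable measurableSet_Ioo)]
    congr 1
    exact lintegral_congr fun t => by
      rw [← ENNReal.ofReal_rpow_of_nonneg (norm_nonneg _) hp₀.le, ofReal_norm]
  rw [hL, ← ENNReal.toReal_ofReal (integral_nonneg fun z => by positivity), hJ,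
    ← ENNReal.toReal_mul]
  exact ENNReal.toReal_mono (ENNReal.mul_ne_top (poincareConst_ne_top hp₀ hαp)
    (hJ ▸ ENNReal.ofReal_ne_top))
    (lintegral_enorm_rpow_le_poincareConst_mul hp.le (by linarith) hu hu1)
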